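/- Let ψ : ℝⁿ → ℝ be C², let x₀ ∈ ℝⁿ, let (p_k)_{k∈ℕ} be a sequence of reals with p_k > 2 and p_k → ∞, and let x_k → x₀ be a sequence of points such that for every k one has ∇ψ(x_k) ≠ 0 and (p_k − 2)‖∇ψ(x_k)‖^{p_k−4} Δ_∞ψ(x_k) + ‖∇ψ(x_k)‖^{p_k−2} Δψ(x_k) ≤ 0. Then Δ_∞ψ(x₀) ≤ 0. -/

import Mathlib

open Filter

/-- The infinity-Laplacian `Δ_∞ψ(x) = ⟨D²ψ(x) ∇ψ(x), ∇ψ(x)⟩` of `ψ` at `x`,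
where the Hessian is `D²ψ(x) = D(∇ψ)(x)`. -/
noncomputable def infLap (n : ℕ) (ψ : EuclideanSpace ℝ (Fin n) → ℝ)
    (x : EuclideanSpace ℝ (Fin n)) : ℝ :=
  inner ℝ (fderiv ℝ (gradient ψ) x (gradient ψ x)) (gradient ψ x)

/-- The Laplacian `Δψ(x)`, i.e. the trace of the Hessian `D²ψ(x)`. -/
noncomputable def lap (n : ℕ) (ψ : EuclideanSpace ℝ (Fin n) → ℝ)
    (x : EuclideanSpace ℝ (Fin n)) : ℝ :=
  ∑ i : Fin n, inner ℝ (fderiv ℝ (gradient ψ) x (EuclideanSpace.single i (1 : ℝ)))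
    (EuclideanSpace.single i (1 : ℝ))

/-! Dividing the `p`-Laplace inequality by `‖∇ψ‖^(p-4)` gives
`(p_k - 2) Δ_∞ψ(x_k) + ‖∇ψ(x_k)‖² Δψ(x_k) ≤ 0` (also where `∇ψ` vanishes, since `Δ_∞ψ` does
too). The second term converges because `ψ` is `C²`, so after dividing by `p_k - 2 → ∞` it
tends to `0`, while `Δ_∞ψ(x_k) → Δ_∞ψ(x₀)`. -/

theorem contDiff_gradient {F : Type*} [NormedAddCommGroup F] [InnerProductSpace ℝ F]
    [CompleteSpace F] {f : F → ℝ} {k : WithTop ℕ∞} (hf : ContDiff ℝ (k + 1) f) :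
    ContDiff ℝ k (gradient f) :=
  (InnerProductSpace.toDual ℝ F).symm.contDiff.comp (hf.fderiv_right le_rfl)

section Continuity

variable {n : ℕ} {ψ : EuclideanSpace ℝ (Fin n) → ℝ}

theorem ContDiff.continuous_infLap (hψ : ContDiff ℝ 2 ψ) : Continuous (infLap n ψ) := by
  have hg : ContDiff ℝ 1 (gradient ψ) := contDiff_gradient hψ
  exact ((hg.continuous_fderiv one_ne_zero).clm_apply hg.continuous).inner hg.continuous

theorem ContDiff.continuous_lap (hψ : ContDiff ℝ 2 ψ) : Continuous (lap n ψ) := by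
  have hg : ContDiff ℝ 1 (gradient ψ) := contDiff_gradient hψ
  exact continuous_finsetSum _ fun i _ =>
    ((hg.continuous_fderiv one_ne_zero).clm_apply continuous_const).inner continuous_const

end Continuity

theorem mul_add_sq_mul_nonpos_of_rpow {a p I L : ℝ} (ha : 0 < a)
    (h : (p - 2) * a ^ (p - 4) * I + a ^ (p - 2) * L ≤ 0) :
    (p - 2) * I + a ^ 2 * L ≤ 0 := by
  have hsplit : a ^ (p - 2) = a ^ (p - 4) * a ^ 2 := by
    rw [← Real.rpow_natCast, ← Real.rpow_add ha]
    ring_nf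
  rw [hsplit] at h
  have hfactor : a ^ (p - 4) * ((p - 2) * I + a ^ 2 * L) ≤ 0 := by linarith
  exact nonpos_of_mul_nonpos_right hfactor (Real.rpow_pos_of_pos ha _)

theorem infLap_mul_add_nonpos_of_pLap_nonpos {n : ℕ} {ψ : EuclideanSpace ℝ (Fin n) → ℝ}
    {p : ℝ} {x : EuclideanSpace ℝ (Fin n)}
    (h : (p - 2) * ‖gradient ψ x‖ ^ (p - 4) * infLap n ψ x
      + ‖gradient ψ x‖ ^ (p - 2) * lap n ψ x ≤ 0) :
    (p - 2) * infLap n ψ x + ‖gradient ψ x‖ ^ 2 * lap n ψ x ≤ 0 := by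
  rcases eq_or_ne (gradient ψ x) 0 with hzero | hne
  · simp [infLap, hzero]
  · exact mul_add_sq_mul_nonpos_of_rpow (norm_pos_iff.mpr hne) h

theorem nonpos_of_tendsto_of_mul_add_nonpos {α : Type*} {l : Filter α} [l.NeBot]
    {t u v : α → ℝ} {a b : ℝ} (ht : Tendsto t l atTop) (hu : Tendsto u l (nhds a))
    (hv : Tendsto v l (nhds b)) (h : ∀ᶠ k in l, t k * u k + v k ≤ 0) : a ≤ 0 := by
  have hbound : ∀ᶠ k in l, u k ≤ -v k / t k := by
    filter_upwards [h, ht.eventually_gt_atTop 0] with k hk htk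
    rw [le_div_iff₀ htk]
    linarith
  exact le_of_tendsto_of_tendsto hu (hv.neg.div_atTop ht) hbound

theorem infLap_nonpos_of_limit_general
    (n : ℕ) (ψ : EuclideanSpace ℝ (Fin n) → ℝ) (hψ : ContDiff ℝ 2 ψ)
    (x₀ : EuclideanSpace ℝ (Fin n))
    (p : ℕ → ℝ) (hp : Tendsto p atTop atTop)
    (x : ℕ → EuclideanSpace ℝ (Fin n)) (hx : Tendsto x atTop (nhds x₀))
    (hineq : ∀ k, (p k - 2) * ‖gradient ψ (x k)‖ ^ (p k - 4) * infLap n ψ (x k)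
      + ‖gradient ψ (x k)‖ ^ (p k - 2) * lap n ψ (x k) ≤ 0) :
    infLap n ψ x₀ ≤ 0 := by
  have hinfLap : Tendsto (fun k => infLap n ψ (x k)) atTop (nhds (infLap n ψ x₀)) :=
    (hψ.continuous_infLap.tendsto x₀).comp hx
  have hlapTerm : Tendsto (fun k => ‖gradient ψ (x k)‖ ^ 2 * lap n ψ (x k)) atTop
      (nhds (‖gradient ψ x₀‖ ^ 2 * lap n ψ x₀)) :=
    ((((contDiff_gradient (k := 1) hψ).continuous.norm.pow 2).mul
      hψ.continuous_lap).tendsto x₀).comp hx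
  exact nonpos_of_tendsto_of_mul_add_nonpos (tendsto_atTop_add_const_right atTop (-2) hp)
    hinfLap hlapTerm
    (Eventually.of_forall fun k => infLap_mul_add_nonpos_of_pLap_nonpos (hineq k))

/-- passing to the limit in the `p_k`-Laplace inequality gives
`Δ_∞ψ(x₀) ≤ 0`. -/
theorem infLap_nonpos_of_limit
    (n : ℕ) (ψ : EuclideanSpace ℝ (Fin n) → ℝ) (hψ : ContDiff ℝ 2 ψ)
    (x₀ : EuclideanSpace ℝ (Fin n))
    (p : ℕ → ℝ) (hp2 : ∀ k, 2 < p k) (hp : Tendsto p atTop atTop)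
    (x : ℕ → EuclideanSpace ℝ (Fin n)) (hx : Tendsto x atTop (nhds x₀))
    (hgrad : ∀ k, gradient ψ (x k) ≠ 0)
    (hineq : ∀ k, (p k - 2) * ‖gradient ψ (x k)‖ ^ (p k - 4) * infLap n ψ (x k)
      + ‖gradient ψ (x k)‖ ^ (p k - 2) * lap n ψ (x k) ≤ 0) :
    infLap n ψ x₀ ≤ 0 :=
  infLap_nonpos_of_limit_general n ψ hψ x₀ p hp x hx hineq
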